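/- Fix k ≥ 4, write k = 2i + r with r ∈ {0,1}, and let b ≥ 2. For N ≥ b^{k-1}+1, if θ(b) := ⌊N/(b^{k-1}+1)⌋, then every n ≤ N that is k-palindromic in base b has leading base-b digit at most θ(b), and hence the count of such n is at most θ(b)·b^{i+r-1} ≤ N/b^i. -/

import Mathlib

/-!
The leading digit `d = n / b ^ (k - 1)` of a `k`-palindrome `n` is also its last digit `n % b`,
so `n ≥ d * b ^ (k - 1) + d` and hence `d ≤ θ`. A palindrome of length `2 i + r` is recovered from
its top `i + r` digits, i.e. from `n / b ^ i`; this quotient has top digit `d ∈ [1, θ]`, so it lies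
in `[b ^ (i + r - 1), (θ + 1) b ^ (i + r - 1))`, an interval with `θ b ^ (i + r - 1)` elements.
Finally `θ b ^ (i + r - 1) b ^ i = θ b ^ (k - 1) ≤ N`.
-/

def IsKPalin (b k n : ℕ) : Prop :=
  2 ≤ b ∧ (Nat.digits b n).length = k ∧ (Nat.digits b n).Palindrome

theorem List.Palindrome.reverse_drop_append_drop {α : Type*} {l : List α} (hl : l.Palindrome)
    {i r : ℕ} (hlen : l.length = 2 * i + r) : ((l.drop i).drop r).reverse ++ l.drop i = l := by
  conv_rhs => rw [← List.take_append_drop i l]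
  congr 1
  conv_rhs => rw [← hl.reverse_eq]
  rw [List.take_reverse, List.drop_drop, hlen]
  congr 2
  omega

namespace Nat

theorem digits_div_base {b : ℕ} (hb : 1 < b) (n : ℕ) : digits b (n / b) = (digits b n).tail := by
  rcases eq_or_ne n 0 with rfl | hn
  · simp
  · rw [digits_eq_cons_digits_div hb hn, List.tail_cons]

theorem digits_div_pow {b : ℕ} (hb : 1 < b) (n j : ℕ) :
    digits b (n / b ^ j) = (digits b n).drop j := by
  induction j generalizing n with
  | zero => simp
  | succ j ih => rw [pow_succ', ← Nat.div_div_eq_div_mul, ih, digits_div_base hb, List.drop_tail]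

theorem div_pow_length_digits_sub_one {b n d : ℕ} (hb : 1 < b) (hd : d ∈ (digits b n).getLast?) :
    n / b ^ ((digits b n).length - 1) = d := by
  obtain ⟨hne, rfl⟩ := List.mem_getLast?_eq_getLast hd
  rw [← ofDigits_digits b (n / _), digits_div_pow hb, List.drop_length_sub_one hne,
    ofDigits_singleton]

theorem div_pow_mul_le_of_palindrome {b n : ℕ} (hb : 1 < b) (hpal : (digits b n).Palindrome)
    (hlen : 2 ≤ (digits b n).length) :
    n / b ^ ((digits b n).length - 1) * (b ^ ((digits b n).length - 1) + 1) ≤ n := by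
  set m := (digits b n).length - 1
  have hne : digits b n ≠ [] := List.ne_nil_of_length_pos (by omega)
  have hd : (digits b n).getLast hne ∈ (digits b n).getLast? := List.getLast_mem_getLast? hne
  have hhead : (digits b n).head? = some ((digits b n).getLast hne) := by
    rw [← List.getLast?_reverse, hpal.reverse_eq]; exact hd
  have hmod : n % b = n / b ^ m := by
    rw [div_pow_length_digits_sub_one hb hd, ← head!_digits hb.ne', List.head!_of_head? hhead]
  have hmod_le : n % b ≤ n % b ^ m := by
    rw [← mod_mod_of_dvd n (dvd_pow_self b (by omega : m ≠ 0))]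
    exact mod_le _ _
  calc n / b ^ m * (b ^ m + 1) = b ^ m * (n / b ^ m) + n % b := by rw [hmod]; ring
    _ ≤ b ^ m * (n / b ^ m) + n % b ^ m := by gcongr
    _ = n := div_add_mod n (b ^ m)

theorem div_succ_mul_le_div {N m a c : ℕ} (ha : 0 < a) (h : c * a ≤ m) :
    N / (m + 1) * c ≤ N / a := by
  rw [le_div_iff_mul_le ha, mul_assoc]
  calc N / (m + 1) * (c * a) ≤ N / (m + 1) * (m + 1) := by gcongr; omega
    _ ≤ N := div_mul_le_self N _

end Nat

namespace IsKPalin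

variable {b k n : ℕ}

theorem div_pow_eq_of_mem_getLast? {d : ℕ} (h : IsKPalin b k n)
    (hd : d ∈ (Nat.digits b n).getLast?) : n / b ^ (k - 1) = d :=
  h.2.1 ▸ Nat.div_pow_length_digits_sub_one h.1 hd

theorem div_pow_pos (h : IsKPalin b k n) (hk : 1 ≤ k) : 0 < n / b ^ (k - 1) := by
  have hne : Nat.digits b n ≠ [] := List.ne_nil_of_length_pos (h.2.1 ▸ hk)
  rw [h.div_pow_eq_of_mem_getLast? (List.getLast_mem_getLast? hne)]
  exact Nat.pos_of_ne_zero (Nat.getLast_digit_ne_zero b (Nat.digits_ne_nil_iff_ne_zero.mp hne))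

theorem div_pow_le {N : ℕ} (h : IsKPalin b k n) (hk : 2 ≤ k) (hn : n ≤ N) :
    n / b ^ (k - 1) ≤ N / (b ^ (k - 1) + 1) := by
  obtain ⟨hb, hlen, hpal⟩ := h
  rw [Nat.le_div_iff_mul_le (by positivity)]
  subst hlen
  exact (Nat.div_pow_mul_le_of_palindrome hb hpal hk).trans hn

theorem injOn_div_pow {i r : ℕ} (hk : k = 2 * i + r) :
    Set.InjOn (· / b ^ i) {n | IsKPalin b k n} := by
  have recover : ∀ n, IsKPalin b k n → n = Nat.ofDigits b
      (((Nat.digits b (n / b ^ i)).drop r).reverse ++ Nat.digits b (n / b ^ i)) := by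
    rintro n ⟨hb, hlen, hpal⟩
    rw [Nat.digits_div_pow hb, hpal.reverse_drop_append_drop (hlen.trans hk), Nat.ofDigits_digits]
  intro x hx y hy hxy
  rw [recover x hx, recover y hy, show x / b ^ i = y / b ^ i from hxy]

end IsKPalin

theorem ncard_isKPalin_le {b k i r N : ℕ} (hk : 2 ≤ k) (hkir : k = 2 * i + r) :
    {n | n ≤ N ∧ IsKPalin b k n}.ncard ≤ N / (b ^ (k - 1) + 1) * b ^ (i + r - 1) := by
  set θ := N / (b ^ (k - 1) + 1)
  set X := b ^ (i + r - 1)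
  have mapsTo : ∀ n ∈ {n | n ≤ N ∧ IsKPalin b k n}, n / b ^ i ∈ Set.Ico X ((θ + 1) * X) := by
    rintro n ⟨hn, hP⟩
    have hX : 0 < X := pow_pos (by have := hP.1; omega) _
    have hquot : n / b ^ i / X = n / b ^ (k - 1) := by
      rw [Nat.div_div_eq_div_mul, ← pow_add]
      congr 2
      omega
    have hlow : 1 ≤ n / b ^ i / X := hquot ▸ hP.div_pow_pos (by omega)
    have hhigh : n / b ^ i / X < θ + 1 := hquot ▸ Nat.lt_succ_of_le (hP.div_pow_le hk hn)
    exact ⟨by simpa using (Nat.le_div_iff_mul_le hX).1 hlow, (Nat.div_lt_iff_lt_mul hX).1 hhigh⟩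
  calc {n | n ≤ N ∧ IsKPalin b k n}.ncard ≤ (Set.Ico X ((θ + 1) * X)).ncard :=
        Set.ncard_le_ncard_of_injOn _ mapsTo ((IsKPalin.injOn_div_pow hkir).mono fun _ h ↦ h.2)
          (Set.finite_Ico _ _)
    _ = θ * X := by rw [Set.ncard_Ico_nat, add_one_mul, Nat.add_sub_cancel]

theorem stmt_7_general (k i r b N : ℕ) (hk : 4 ≤ k) (hkir : k = 2 * i + r) (hb : 2 ≤ b) :
    (∀ n : ℕ, n ≤ N → IsKPalin b k n →
      ∀ d ∈ (Nat.digits b n).getLast?, d ≤ N / (b ^ (k - 1) + 1)) ∧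
    {n : ℕ | n ≤ N ∧ IsKPalin b k n}.ncard ≤
      N / (b ^ (k - 1) + 1) * b ^ (i + r - 1) ∧
    N / (b ^ (k - 1) + 1) * b ^ (i + r - 1) ≤ N / b ^ i := by
  refine ⟨fun n hn hP d hd ↦ ?_, ncard_isKPalin_le (by omega) hkir, ?_⟩
  · exact hP.div_pow_eq_of_mem_getLast? hd ▸ hP.div_pow_le (by omega) hn
  · refine Nat.div_succ_mul_le_div (by positivity) (le_of_eq ?_)
    rw [← pow_add]
    congr 1
    omega

theorem stmt_7 (k i r b N : ℕ) (hk : 4 ≤ k) (hr : r = 0 ∨ r = 1)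
    (hkir : k = 2 * i + r) (hb : 2 ≤ b) (hN : b ^ (k - 1) + 1 ≤ N) :
    (∀ n : ℕ, n ≤ N → IsKPalin b k n →
      ∀ d ∈ (Nat.digits b n).getLast?, d ≤ N / (b ^ (k - 1) + 1)) ∧
    {n : ℕ | n ≤ N ∧ IsKPalin b k n}.ncard ≤
      N / (b ^ (k - 1) + 1) * b ^ (i + r - 1) ∧
    N / (b ^ (k - 1) + 1) * b ^ (i + r - 1) ≤ N / b ^ i :=
  stmt_7_general k i r b N hk hkir hb
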